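/- The generating functions R_b satisfy the functional equation R_b(x) = (x^b/(1−2x^b)) · (Σ_{i=1}^{b−1} (2R_i(x) + H_i(x)) + H_b(x)) for all b ≥ 1. -/

import Mathlib

/-- `hFun b n` is the number of `(n,b)`-domino stacks, defined by the recurrence
`h_b(n) = Σ_{i=1}^{b} (2(b-i)+1) h_i(n-b)` with `h_b(b) = 1` and `h_b(n) = 0`
when `n < 1`, `b < 1`, or `n < b`. -/
def hFun : ℕ → ℕ → ℕ
  | b, n =>
    if b = 0 ∨ n ≤ b then (if n = b ∧ 1 ≤ b then 1 else 0)
    else ∑ i ∈ Finset.Icc 1 b, (2 * (b - i) + 1) * hFun i (n - b)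
termination_by b n => n
decreasing_by omega

/-- `rFun b n` is the number of right-skewed `(n,b)`-domino towers, defined by the
recurrence `r_b(n) = Σ_{i=1}^{b} (2 r_i(n-b) + h_i(n-b))` with `r_b(b+1) = 1` and
`r_b(n) = 0` for `n < 2`, `b < 1`, or `n < b+1`. -/
def rFun : ℕ → ℕ → ℕ
  | b, n =>
    if b = 0 ∨ n ≤ b + 1 then (if n = b + 1 ∧ 1 ≤ b then 1 else 0)
    else ∑ i ∈ Finset.Icc 1 b, (2 * rFun i (n - b) + hFun i (n - b))
termination_by b n => n
decreasing_by omega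


/-!
The recurrence for `r_b` holds for every `n` once `b ≥ 1`: the boundary value `r_b(b+1) = 1`
is the `i = 1` term at `n - b = 1`, since `h_1(1) = 1` and all other `r_i(1)`, `h_i(1)` vanish.
Hence `R_b = x^b Σ_{i=1}^{b} (2R_i + H_i)`; moving the term `2x^b R_b` to the left and dividing
by `1 - 2x^b`, a unit of `ℚ⟦x⟧`, gives the functional equation.
-/

open PowerSeries

@[simp]
lemma hFun_zero (b : ℕ) : hFun b 0 = 0 := by
  rw [hFun, if_pos (by omega), if_neg (by omega)]

@[simp]
lemma rFun_zero (b : ℕ) : rFun b 0 = 0 := by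
  rw [rFun, if_pos (by omega), if_neg (by omega)]

@[simp]
lemma rFun_one (b : ℕ) : rFun b 1 = 0 := by
  rw [rFun, if_pos (by omega), if_neg (by omega)]

lemma hFun_one (b : ℕ) : hFun b 1 = if b = 1 then 1 else 0 := by
  rw [hFun, if_pos (by omega)]
  split_ifs <;> omega

lemma rFun_eq_sum {b : ℕ} (hb : 1 ≤ b) (n : ℕ) :
    rFun b n = ∑ i ∈ Finset.Icc 1 b, (2 * rFun i (n - b) + hFun i (n - b)) := by
  rw [rFun]
  split_ifs with hsmall hedge
  · simp [show n - b = 1 by omega, hFun_one, hb]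
  · simp [show n - b = 0 by omega]
  · rfl

lemma mk_rFun_eq {R : Type*} [CommSemiring R] {b : ℕ} (hb : 1 ≤ b) :
    mk (fun n => (rFun b n : R)) =
      X ^ b * ∑ i ∈ Finset.Icc 1 b,
        (2 * mk (fun n => (rFun i n : R)) + mk (fun n => (hFun i n : R))) := by
  ext n
  rw [coeff_X_pow_mul', coeff_mk, rFun_eq_sum hb]
  split_ifs with hn
  · simp [map_sum, two_mul]
  · simp [show n - b = 0 by omega]

open PowerSeries in
/-- The generating functions `R_b(x) = Σ_{n≥0} r_b(n) xⁿ` satisfy the functional equation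
`R_b(x) = (x^b/(1-2x^b)) (Σ_{i=1}^{b-1} (2R_i(x) + H_i(x)) + H_b(x))` for all `b ≥ 1`. -/
theorem right_skewed_genFun_eq (b : ℕ) (hb : 1 ≤ b) :
    PowerSeries.mk (fun n => (rFun b n : ℚ)) =
      (X : PowerSeries ℚ) ^ b * (1 - 2 * (X : PowerSeries ℚ) ^ b)⁻¹ *
        ((∑ i ∈ Finset.Icc 1 (b - 1),
            (2 * PowerSeries.mk (fun n => (rFun i n : ℚ)) +
              PowerSeries.mk (fun n => (hFun i n : ℚ)))) +
          PowerSeries.mk (fun n => (hFun b n : ℚ))) := by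
  have hunit : constantCoeff (1 - 2 * (X : ℚ⟦X⟧) ^ b) ≠ 0 := by
    simp [zero_pow (show b ≠ 0 by omega)]
  have hrec := mk_rFun_eq (R := ℚ) hb
  obtain ⟨c, rfl⟩ : ∃ c, b = c + 1 := ⟨b - 1, by omega⟩
  rw [Finset.sum_Icc_succ_top (by omega)] at hrec
  rw [mul_right_comm, eq_mul_inv_iff_mul_eq hunit, Nat.add_sub_cancel]
  linear_combination hrec
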